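/- Let ρ ≥ 1, let {ψ̃_x}_{x ∈ X} be an orthonormal representation of degree ρ of the channel in a finite-dimensional complex inner product space, and let f be a unit vector in that space. Let n ≥ 1, let k : X → ℕ satisfy ∑_a k(a) = n, and let θ ∈ ℝ satisfy ∏_{a ∈ X} |⟨ψ̃_a, f⟩|^{2·k(a)} ≥ e^{−nθ}. Let M ≥ 2 and let c_1, …, c_M ∈ X^n be codewords each of composition k, and assume e^{−nθ} ≥ 1/M. Then max over pairs m ≠ m' of ∏_{i=1}^n ⟨ψ_{c_m(i)}, ψ_{c_{m'}(i)}⟩ is at least (e^{−nθ} − 1/M)^ρ. -/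

import Mathlib

open Finset
open scoped InnerProductSpace ComplexConjugate

/-!
The tensor products `u m = ψ̃(c m 1) ⊗ ⋯ ⊗ ψ̃(c m n)` are unit vectors whose overlaps are products of
letter overlaps, so `|⟪u m, u m'⟫|` is at most the `1/ρ`-th power of the Bhattacharyya coefficient of
the pair of codewords. Since every codeword has composition `k`, each `u m` has squared overlap at
least `t = e^{-nθ}` with `f ⊗ ⋯ ⊗ f`. Finally, a unit vector `f` with squared overlap at least `t`
with each of `M` unit vectors whose mutual overlaps are at most `G` satisfies `M t ≤ 1 + G M`:
test `f` against `w = ∑ ⟪u m, f⟫ u m` and expand `‖w‖²` through the Gram matrix.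
-/

section TensorEmbedding

variable {E : Type*} [NormedAddCommGroup E] [InnerProductSpace ℂ E] [FiniteDimensional ℂ E]
  {ι : Type*} [Fintype ι] [DecidableEq ι]

/-- The coordinates of `⨂ i, v i` in the tensor power of the standard orthonormal basis of `E`. -/
noncomputable def tensorEmbedding (v : ι → E) :
    EuclideanSpace ℂ (ι → Fin (Module.finrank ℂ E)) :=
  WithLp.toLp 2 fun j => ∏ i, (stdOrthonormalBasis ℂ E).repr (v i) (j i)

theorem inner_tensorEmbedding (v w : ι → E) :
    ⟪tensorEmbedding v, tensorEmbedding w⟫_ℂ = ∏ i, ⟪v i, w i⟫_ℂ := by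
  set b := stdOrthonormalBasis ℂ E
  have hcoord : ∀ x y : E, ⟪x, y⟫_ℂ = ∑ t, conj (b.repr x t) * b.repr y t := fun x y => by
    rw [← b.repr.inner_map_map, PiLp.inner_apply]
    simp [RCLike.inner_apply, mul_comm]
  simp only [hcoord, prod_univ_sum, PiLp.inner_apply, tensorEmbedding, RCLike.inner_apply,
    map_prod, ← prod_mul_distrib]
  exact sum_congr rfl fun j _ => prod_congr rfl fun i _ => mul_comm _ _

theorem norm_tensorEmbedding (v : ι → E) : ‖tensorEmbedding v‖ = ∏ i, ‖v i‖ := by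
  have hsq : ‖tensorEmbedding v‖ ^ 2 = (∏ i, ‖v i‖) ^ 2 := by
    rw [@norm_sq_eq_re_inner ℂ, inner_tensorEmbedding, ← prod_pow]
    simp_rw [inner_self_eq_norm_sq_to_K]
    norm_cast
  exact (pow_left_inj₀ (norm_nonneg _) (prod_nonneg fun i _ => norm_nonneg _) two_ne_zero).1 hsq

end TensorEmbedding

theorem sum_sum_mul_mul_le_of_offDiag_le {ι : Type*} [Fintype ι] [DecidableEq ι]
    {a : ι → ℝ} (ha : ∀ i, 0 ≤ a i) {K : ι → ι → ℝ} {G : ℝ} (hG : 0 ≤ G)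
    (hdiag : ∀ i, K i i ≤ 1) (hoff : ∀ i j, i ≠ j → K i j ≤ G) :
    ∑ i, ∑ j, a i * a j * K i j ≤ (1 + G * Fintype.card ι) * ∑ i, a i ^ 2 := by
  have hK : ∀ i j, K i j ≤ (if i = j then 1 else 0) + G := fun i j => by
    by_cases h : i = j
    · subst h; simpa using (hdiag i).trans (le_add_of_nonneg_right hG)
    · simpa [h] using hoff i j h
  calc ∑ i, ∑ j, a i * a j * K i j
      ≤ ∑ i, ∑ j, a i * a j * ((if i = j then 1 else 0) + G) := by
        gcongr with i _ j _
        · exact mul_nonneg (ha i) (ha j)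
        · exact hK i j
    _ = ∑ i, a i ^ 2 + G * (∑ i, a i) ^ 2 := by
        simp only [mul_add, mul_ite, mul_one, mul_zero, sum_add_distrib, sum_ite_eq,
          mem_univ, if_true, ← sq]
        congr 1
        simp_rw [sq, sum_mul_sum, mul_sum]
        exact sum_congr rfl fun i _ => sum_congr rfl fun j _ => by ring
    _ ≤ ∑ i, a i ^ 2 + G * (Fintype.card ι * ∑ i, a i ^ 2) := by
        gcongr
        simpa using sq_sum_le_card_mul_sum_sq (s := univ) (f := a)
    _ = (1 + G * Fintype.card ι) * ∑ i, a i ^ 2 := by ring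

section GramBound

variable {F : Type*} [NormedAddCommGroup F] [InnerProductSpace ℂ F] {ι : Type*} [Fintype ι]

theorem sum_norm_inner_sq_le {f : F} (hf : ‖f‖ ≤ 1) {u : ι → F} (hu : ∀ i, ‖u i‖ ≤ 1)
    {G : ℝ} (hG : 0 ≤ G) (hoff : ∀ i j, i ≠ j → ‖⟪u i, u j⟫_ℂ‖ ≤ G) :
    ∑ i, ‖⟪f, u i⟫_ℂ‖ ^ 2 ≤ 1 + G * Fintype.card ι := by
  classical
  set a : ι → ℝ := fun i => ‖⟪f, u i⟫_ℂ‖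
  set A := ∑ i, a i ^ 2
  set w : F := ∑ i, ⟪u i, f⟫_ℂ • u i
  have hfw : ⟪f, w⟫_ℂ = A := by
    simp only [w, A, a, inner_sum, inner_smul_right, ← inner_conj_symm (u _) f,
      RCLike.conj_mul]
    push_cast; rfl
  have hAw : A ≤ ‖w‖ := by
    calc A = ‖⟪f, w⟫_ℂ‖ := by
          rw [hfw, Complex.norm_real, Real.norm_of_nonneg (by positivity)]
      _ ≤ ‖f‖ * ‖w‖ := norm_inner_le_norm _ _
      _ ≤ ‖w‖ := mul_le_of_le_one_left (norm_nonneg _) hf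
  have hw : ‖w‖ ^ 2 ≤ ∑ i, ∑ j, a i * a j * ‖⟪u i, u j⟫_ℂ‖ := by
    rw [← inner_self_eq_norm_sq (𝕜 := ℂ), inner_self_re_eq_norm]
    simp only [w, sum_inner, inner_sum, inner_smul_left, inner_smul_right, mul_sum]
    refine (norm_sum_le _ _).trans (sum_le_sum fun i _ => (norm_sum_le _ _).trans
      (sum_le_sum fun j _ => ?_))
    simp [a, norm_inner_symm (u i) f, norm_inner_symm (u j) (u i), mul_assoc]
  have hdiag : ∀ i, ‖⟪u i, u i⟫_ℂ‖ ≤ 1 := fun i => by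
    rw [← inner_self_re_eq_norm, inner_self_eq_norm_sq]
    exact pow_le_one₀ (norm_nonneg _) (hu i)
  have hA_sq : A * A ≤ (1 + G * Fintype.card ι) * A :=
    calc A * A ≤ ‖w‖ ^ 2 := by nlinarith [sum_nonneg fun i (_ : i ∈ univ) => sq_nonneg (a i)]
      _ ≤ _ := hw.trans (sum_sum_mul_mul_le_of_offDiag_le (fun i => norm_nonneg _) hG hdiag hoff)
  rcases (sum_nonneg fun i (_ : i ∈ univ) => sq_nonneg (a i)).eq_or_lt with h0 | hpos
  · rw [show A = 0 from h0.symm]; positivity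
  · exact le_of_mul_le_mul_right hA_sq hpos

theorem exists_ne_sub_inv_card_le_norm_inner [Nontrivial ι] {f : F} (hf : ‖f‖ ≤ 1) {u : ι → F}
    (hu : ∀ i, ‖u i‖ ≤ 1) {t : ℝ} (ht : ∀ i, t ≤ ‖⟪f, u i⟫_ℂ‖ ^ 2) :
    ∃ i j, i ≠ j ∧ t - 1 / Fintype.card ι ≤ ‖⟪u i, u j⟫_ℂ‖ := by
  classical
  obtain ⟨i₀, j₀, h₀⟩ := exists_pair_ne ι
  obtain ⟨⟨i, j⟩, hij, hmax⟩ := univ.offDiag.exists_max_image (fun p => ‖⟪u p.1, u p.2⟫_ℂ‖)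
    ⟨(i₀, j₀), by simpa using h₀⟩
  have hne : i ≠ j := (mem_offDiag.1 hij).2.2
  refine ⟨i, j, hne, ?_⟩
  have hcard : (0 : ℝ) < Fintype.card ι := by exact_mod_cast Fintype.card_pos
  have hsum := sum_norm_inner_sq_le hf hu (norm_nonneg _)
    fun i' j' h => hmax (i', j') (mem_offDiag.2 ⟨mem_univ _, mem_univ _, h⟩)
  have hlow : Fintype.card ι * t ≤ ∑ i, ‖⟪f, u i⟫_ℂ‖ ^ 2 := by
    simpa using sum_le_sum fun i (_ : i ∈ univ) => ht i
  rw [sub_le_iff_le_add, ← mul_le_mul_iff_of_pos_left hcard]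
  field_simp
  linarith

end GramBound

theorem prod_comp_eq_prod_pow_of_card_fiber {ι κ M : Type*} [Fintype ι] [Fintype κ]
    [DecidableEq κ] [CommMonoid M] (g : κ → M) {c : ι → κ} {k : κ → ℕ}
    (hc : ∀ a, #{i | c i = a} = k a) :
    ∏ i, g (c i) = ∏ a, g a ^ k a := by
  rw [← prod_fiberwise univ c fun i => g (c i)]
  refine prod_congr rfl fun a _ => ?_
  rw [prod_congr rfl fun i hi => congrArg g (mem_filter.1 hi).2, prod_const, hc]

section Channel

variable {X Y : Type*} [Fintype Y]

noncomputable def bhattacharyya (W : X → Y → ℝ) (x x' : X) : ℝ :=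
  ∑ y, √(W x y * W x' y)

theorem bhattacharyya_nonneg (W : X → Y → ℝ) (x x' : X) : 0 ≤ bhattacharyya W x x' :=
  sum_nonneg fun _ _ => Real.sqrt_nonneg _

theorem bhattacharyya_self {W : X → Y → ℝ} (hW0 : ∀ x y, 0 ≤ W x y)
    (hW1 : ∀ x, ∑ y, W x y = 1) (x : X) : bhattacharyya W x x = 1 := by
  simp only [bhattacharyya, Real.sqrt_mul_self (hW0 x _), hW1]

variable {E : Type*} [NormedAddCommGroup E] [InnerProductSpace ℂ E]

theorem norm_inner_le_bhattacharyya_rpow {W : X → Y → ℝ} (hW0 : ∀ x y, 0 ≤ W x y)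
    (hW1 : ∀ x, ∑ y, W x y = 1) {ρ : ℝ} {ψt : X → E} (hψt : ∀ x, ‖ψt x‖ = 1)
    (hrep : ∀ x x', x ≠ x' → ‖⟪ψt x, ψt x'⟫_ℂ‖ ≤ bhattacharyya W x x' ^ (1 / ρ)) (x x' : X) :
    ‖⟪ψt x, ψt x'⟫_ℂ‖ ≤ bhattacharyya W x x' ^ (1 / ρ) := by
  rcases eq_or_ne x x' with rfl | hne
  · rw [bhattacharyya_self hW0 hW1, Real.one_rpow, ← inner_self_re_eq_norm,
      inner_self_eq_norm_sq, hψt, one_pow]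
  · exact hrep x x' hne

end Channel

theorem stmt4_general {X Y : Type*} [Fintype X] [Fintype Y] [DecidableEq X]
    {E : Type*} [NormedAddCommGroup E] [InnerProductSpace ℂ E] [FiniteDimensional ℂ E]
    (W : X → Y → ℝ) (hW0 : ∀ x y, 0 ≤ W x y) (hW1 : ∀ x, ∑ y, W x y = 1)
    (ρ : ℝ) (hρ : 1 ≤ ρ)
    (ψt : X → E) (hψt : ∀ x, ‖ψt x‖ = 1)
    (hrep : ∀ x x', x ≠ x' →
      ‖(inner ℂ (ψt x) (ψt x') : ℂ)‖ ≤ (∑ y, Real.sqrt (W x y * W x' y)) ^ (1 / ρ))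
    (f : E) (hf : ‖f‖ = 1)
    (n : ℕ) (k : X → ℕ)
    (θ : ℝ) (hθ : Real.exp (-(n * θ)) ≤ ∏ a, ‖(inner ℂ (ψt a) f : ℂ)‖ ^ (2 * k a))
    (M : ℕ) (hM : 2 ≤ M)
    (c : Fin M → Fin n → X)
    (hc : ∀ m a, (Finset.univ.filter fun i => c m i = a).card = k a)
    (hMe : 1 / (M : ℝ) ≤ Real.exp (-(n * θ))) :
    ∃ m m', m ≠ m' ∧
      (Real.exp (-(n * θ)) - 1 / (M : ℝ)) ^ ρ
        ≤ ∏ i, ∑ y, Real.sqrt (W (c m i) y * W (c m' i) y) := by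
  have hρ0 : 0 < ρ := by linarith
  set u : Fin M → _ := fun m => tensorEmbedding fun i => ψt (c m i)
  set f₀ := tensorEmbedding fun _ : Fin n => f
  have hu : ∀ m, ‖u m‖ ≤ 1 := fun m => by simp [u, norm_tensorEmbedding, hψt]
  have hf₀ : ‖f₀‖ ≤ 1 := by simp [f₀, norm_tensorEmbedding, hf]
  have hoverlap : ∀ m, Real.exp (-(n * θ)) ≤ ‖⟪f₀, u m⟫_ℂ‖ ^ 2 := fun m => by
    rw [inner_tensorEmbedding, norm_prod, ← prod_pow,
      prod_comp_eq_prod_pow_of_card_fiber (fun a => ‖⟪f, ψt a⟫_ℂ‖ ^ 2) (hc m)]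
    simpa only [norm_inner_symm f, pow_mul] using hθ
  have : Nontrivial (Fin M) := Fin.nontrivial_iff_two_le.2 hM
  obtain ⟨m, m', hne, hclose⟩ := exists_ne_sub_inv_card_le_norm_inner hf₀ hu hoverlap
  have hB : ∀ i, 0 ≤ bhattacharyya W (c m i) (c m' i) := fun i => bhattacharyya_nonneg W _ _
  refine ⟨m, m', hne, (Real.le_rpow_inv_iff_of_pos (sub_nonneg.2 hMe)
    (prod_nonneg fun i _ => hB i) hρ0).1 ?_⟩
  calc _ ≤ ‖⟪u m, u m'⟫_ℂ‖ := by simpa using hclose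
    _ = ∏ i, ‖⟪ψt (c m i), ψt (c m' i)⟫_ℂ‖ := by rw [inner_tensorEmbedding, norm_prod]
    _ ≤ ∏ i, bhattacharyya W (c m i) (c m' i) ^ ρ⁻¹ :=
        prod_le_prod (fun _ _ => norm_nonneg _) fun i _ => by
          simpa using norm_inner_le_bhattacharyya_rpow hW0 hW1 hψt hrep _ _
    _ = _ := Real.finsetProd_rpow _ _ (fun i _ => hB i) _

/-- Constant-composition umbrella bound: for codewords all of composition `k` and a
handle `f` with `∏_a |⟨ψt a, f⟩|^{2 k(a)} ≥ e^{−nθ}`, some pair `m ≠ m'` of codewords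
has Bhattacharyya coefficient at least `(e^{−nθ} − 1/M)^ρ`. -/
theorem stmt4 {X Y : Type*} [Fintype X] [Fintype Y] [DecidableEq X]
    {E : Type*} [NormedAddCommGroup E] [InnerProductSpace ℂ E] [FiniteDimensional ℂ E]
    (W : X → Y → ℝ) (hW0 : ∀ x y, 0 ≤ W x y) (hW1 : ∀ x, ∑ y, W x y = 1)
    (ρ : ℝ) (hρ : 1 ≤ ρ)
    (ψt : X → E) (hψt : ∀ x, ‖ψt x‖ = 1)
    (hrep : ∀ x x', x ≠ x' →
      ‖(inner ℂ (ψt x) (ψt x') : ℂ)‖ ≤ (∑ y, Real.sqrt (W x y * W x' y)) ^ (1 / ρ))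
    (f : E) (hf : ‖f‖ = 1)
    (n : ℕ) (hn : 1 ≤ n) (k : X → ℕ) (hk : ∑ a, k a = n)
    (θ : ℝ) (hθ : Real.exp (-(n * θ)) ≤ ∏ a, ‖(inner ℂ (ψt a) f : ℂ)‖ ^ (2 * k a))
    (M : ℕ) (hM : 2 ≤ M)
    (c : Fin M → Fin n → X)
    (hc : ∀ m a, (Finset.univ.filter fun i => c m i = a).card = k a)
    (hMe : 1 / (M : ℝ) ≤ Real.exp (-(n * θ))) :
    ∃ m m', m ≠ m' ∧
      (Real.exp (-(n * θ)) - 1 / (M : ℝ)) ^ ρ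
        ≤ ∏ i, ∑ y, Real.sqrt (W (c m i) y * W (c m' i) y) :=
  stmt4_general W hW0 hW1 ρ hρ ψt hψt hrep f hf n k θ hθ M hM c hc hMe
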